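/- arXiv:2503.06298 — 5 statements merged into one kernel-verified Lean document; each statement's English description precedes it below -/
import Mathlib

section
/- Let A₀ be a symmetric 3×3 real matrix satisfying: Λ(η|ξ'|² + ν|ξ₃|²) ≤ ⟨A₀ξ, ξ⟩ and |⟨A₀ξ, ζ⟩| ≤ Λ⁻¹(η|ξ'||ζ'| + ν(|ξ₃||ζ'| + |ζ₃||ξ'| + |ξ₃||ζ₃|)) for all ξ = (ξ', ξ₃), ζ = (ζ', ζ₃) ∈ ℝ²×ℝ, where Λ ∈ (0,1) and 0 < ν < η < 1. Let B = I + δ^{α-1}B_g with B_g as above, with |Dg| ≤ L pointwise, and suppose δ^{α-1}η ≤ K₀ν. Then there is a constant C = C(Λ, L, K₀) such that for all ξ, ζ ∈ ℝ³: |⟨A₀B*ξ, B*ζ⟩| ≤ C(η|ξ'||ζ'| + ν|ξ₃||ζ₃| + (δ^{α-1}η + ν)(|ξ₃||ζ'| + |ζ₃||ξ'|)). -/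
open Matrix Real

lemma sqrt_add_sq_tri (a b c d : ℝ) :
    Real.sqrt ((a + b)^2 + (c + d)^2) ≤ Real.sqrt (a^2 + c^2) + Real.sqrt (b^2 + d^2) := by
  have h1 : Real.sqrt (a^2+c^2) ^ 2 = a^2+c^2 := Real.sq_sqrt (by positivity)
  have h2 : Real.sqrt (b^2+d^2) ^ 2 = b^2+d^2 := Real.sq_sqrt (by positivity)
  have h3 : 0 ≤ Real.sqrt (a^2+c^2) := Real.sqrt_nonneg _
  have h4 : 0 ≤ Real.sqrt (b^2+d^2) := Real.sqrt_nonneg _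
  have hcs : a*b + c*d ≤ Real.sqrt (a^2+c^2) * Real.sqrt (b^2+d^2) := by
    nlinarith [sq_nonneg (a*d - b*c), mul_nonneg h3 h4]
  have key : (a+b)^2 + (c+d)^2 ≤ (Real.sqrt (a^2+c^2) + Real.sqrt (b^2+d^2))^2 := by
    nlinarith
  calc Real.sqrt ((a + b)^2 + (c + d)^2)
      ≤ Real.sqrt ((Real.sqrt (a^2+c^2) + Real.sqrt (b^2+d^2))^2) := Real.sqrt_le_sqrt key
    _ = Real.sqrt (a^2+c^2) + Real.sqrt (b^2+d^2) := Real.sqrt_sq (by positivity)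

lemma aux1 (η ν Sξ Sζ Pξ Pζ x y : ℝ) (hη : 0 ≤ η) (hν : 0 ≤ ν) (hx : 0 ≤ x) (hy : 0 ≤ y)
    (hSξ0 : 0 ≤ Sξ) (hSζ0 : 0 ≤ Sζ) (hPξ : 0 ≤ Pξ) (hPζ : 0 ≤ Pζ)
    (h1 : Sξ ≤ Pξ) (h2 : Sζ ≤ Pζ) :
    η * Sξ * Sζ + ν * (x * Sζ + y * Sξ + x * y)
      ≤ η * Pξ * Pζ + ν * (x * Pζ + y * Pξ + x * y) := by
  nlinarith [mul_nonneg hη hSξ0, mul_nonneg hν hx, mul_nonneg hν hy,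
    mul_le_mul h1 h2 hSζ0 hPξ, mul_nonneg hη (mul_nonneg hPξ hPζ)]

lemma aux2 (L K₀ ε η ν X Y x y : ℝ) (hL : 0 ≤ L) (hK : 0 ≤ K₀) (hε0 : 0 ≤ ε) (hε1 : ε ≤ 1)
    (hη : 0 ≤ η) (hν : 0 ≤ ν) (hX : 0 ≤ X) (hY : 0 ≤ Y) (hx : 0 ≤ x) (hy : 0 ≤ y)
    (hK₀ν : ε * η ≤ K₀ * ν) :
    η * (X + ε * x * L) * (Y + ε * y * L)
      + ν * (x * (Y + ε * y * L) + y * (X + ε * x * L) + x * y)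
      ≤ (1 + 2*L + K₀*L^2) * (η * X * Y + ν * x * y + (ε * η + ν) * (x * Y + y * X)) := by
  have hA : ε * ε * η ≤ K₀ * ν := by
    have h1 : ε * (ε * η) ≤ 1 * (ε * η) :=
      mul_le_mul_of_nonneg_right hε1 (by positivity)
    nlinarith
  have f1 : (0:ℝ) ≤ ν * L * (x * Y) := by positivity
  have f2 : (0:ℝ) ≤ ν * L * (y * X) := by positivity
  have f3 : (ε * ε * η) * (L^2 * (x * y)) ≤ (K₀ * ν) * (L^2 * (x * y)) :=
    mul_le_mul_of_nonneg_right hA (by positivity)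
  have f4 : ε * (ν * L * (x * y)) ≤ 1 * (ν * L * (x * y)) :=
    mul_le_mul_of_nonneg_right hε1 (by positivity)
  have f5 : (0:ℝ) ≤ ε * η * (x * Y) := by positivity
  have f6 : (0:ℝ) ≤ ε * η * (y * X) := by positivity
  have f7 : (0:ℝ) ≤ (2*L + K₀*L^2) * (η * (X * Y)) := by positivity
  have f8 : (0:ℝ) ≤ (L + K₀*L^2) * ((ε * η + ν) * (x * Y)) := by positivity
  have f9 : (0:ℝ) ≤ (L + K₀*L^2) * ((ε * η + ν) * (y * X)) := by positivity
  nlinarith [f1, f2, f3, f4, f5, f6, f7, f8, f9]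

/-- Anisotropic boundedness of `⟨A₀ B* ξ, B* ζ⟩` (Proposition 2.1 (b)):
there is `C = C(Λ, L, K₀)` such that for all admissible parameters and all `ξ, ζ`,
`|⟨A₀B*ξ, B*ζ⟩| ≤ C(η|ξ'||ζ'| + ν|ξ₃||ζ₃| + (δ^{α-1}η + ν)(|ξ₃||ζ'| + |ζ₃||ξ'|))`.
Here `B* ξ = ξ + δ^{α-1} ξ₃ • (-D₁g, -D₂g, 0)`. -/
theorem stmt_1 (Λ L K₀ : ℝ) (hΛ : Λ ∈ Set.Ioo (0:ℝ) 1) (hL : 0 ≤ L) (hK : 0 < K₀) :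
    ∃ C > 0, ∀ (η ν δ α : ℝ) (A₀ : Matrix (Fin 3) (Fin 3) ℝ) (g1 g2 : ℝ),
      0 < ν → ν < η → η < 1 → 0 < δ → δ < 1 → 1 < α →
      A₀.IsSymm →
      Real.sqrt (g1 ^ 2 + g2 ^ 2) ≤ L →
      δ ^ (α - 1) * η ≤ K₀ * ν →
      (∀ ξ : Fin 3 → ℝ,
        Λ * (η * ((ξ 0) ^ 2 + (ξ 1) ^ 2) + ν * (ξ 2) ^ 2) ≤ A₀.mulVec ξ ⬝ᵥ ξ) →
      (∀ ξ ζ : Fin 3 → ℝ,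
        |A₀.mulVec ξ ⬝ᵥ ζ| ≤ Λ⁻¹ *
          (η * Real.sqrt ((ξ 0) ^ 2 + (ξ 1) ^ 2) * Real.sqrt ((ζ 0) ^ 2 + (ζ 1) ^ 2)
            + ν * (|ξ 2| * Real.sqrt ((ζ 0) ^ 2 + (ζ 1) ^ 2)
                + |ζ 2| * Real.sqrt ((ξ 0) ^ 2 + (ξ 1) ^ 2) + |ξ 2| * |ζ 2|))) →
      ∀ ξ ζ : Fin 3 → ℝ,
        |A₀.mulVec (ξ + (δ ^ (α - 1) * ξ 2) • ![-g1, -g2, 0]) ⬝ᵥ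
            (ζ + (δ ^ (α - 1) * ζ 2) • ![-g1, -g2, 0])|
          ≤ C * (η * Real.sqrt ((ξ 0) ^ 2 + (ξ 1) ^ 2) * Real.sqrt ((ζ 0) ^ 2 + (ζ 1) ^ 2)
              + ν * |ξ 2| * |ζ 2|
              + (δ ^ (α - 1) * η + ν) *
                (|ξ 2| * Real.sqrt ((ζ 0) ^ 2 + (ζ 1) ^ 2)
                  + |ζ 2| * Real.sqrt ((ξ 0) ^ 2 + (ξ 1) ^ 2))) := by
  obtain ⟨hΛ0, hΛ1⟩ := hΛ
  refine ⟨Λ⁻¹ * (1 + 2*L + K₀*L^2), by positivity, ?_⟩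
  intro η ν δ α A₀ g1 g2 hν hνη hη1 hδ0 hδ1 hα _hsym hg hK₀ν _hell hbd ξ ζ
  set ε : ℝ := δ ^ (α - 1) with hεdef
  have hε0 : 0 < ε := Real.rpow_pos_of_pos hδ0 _
  have hε1 : ε ≤ 1 := Real.rpow_le_one hδ0.le hδ1.le (by linarith)
  set ξ' : Fin 3 → ℝ := ξ + (ε * ξ 2) • ![-g1, -g2, 0] with hξ'
  set ζ' : Fin 3 → ℝ := ζ + (ε * ζ 2) • ![-g1, -g2, 0] with hζ'
  have hξ'0 : ξ' 0 = ξ 0 + (-(ε * ξ 2 * g1)) := by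
    simp [hξ', Matrix.vecHead, Matrix.vecTail]
  have hξ'1 : ξ' 1 = ξ 1 + (-(ε * ξ 2 * g2)) := by
    simp [hξ', Matrix.vecHead, Matrix.vecTail]
  have hξ'2 : ξ' 2 = ξ 2 := by
    simp [hξ', Matrix.vecHead, Matrix.vecTail]
  have hζ'0 : ζ' 0 = ζ 0 + (-(ε * ζ 2 * g1)) := by
    simp [hζ', Matrix.vecHead, Matrix.vecTail]
  have hζ'1 : ζ' 1 = ζ 1 + (-(ε * ζ 2 * g2)) := by
    simp [hζ', Matrix.vecHead, Matrix.vecTail]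
  have hζ'2 : ζ' 2 = ζ 2 := by
    simp [hζ', Matrix.vecHead, Matrix.vecTail]
  set X := Real.sqrt ((ξ 0)^2 + (ξ 1)^2) with hX
  set Y := Real.sqrt ((ζ 0)^2 + (ζ 1)^2) with hY
  have hX0 : 0 ≤ X := Real.sqrt_nonneg _
  have hY0 : 0 ≤ Y := Real.sqrt_nonneg _
  have hG0 : 0 ≤ Real.sqrt (g1^2 + g2^2) := Real.sqrt_nonneg _
  -- bound on horizontal norm of transformed vectors
  have hscale : ∀ c : ℝ, Real.sqrt ((-(c * g1))^2 + (-(c * g2))^2)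
      = |c| * Real.sqrt (g1^2 + g2^2) := by
    intro c
    rw [show (-(c * g1))^2 + (-(c * g2))^2 = c^2 * (g1^2 + g2^2) by ring,
      Real.sqrt_mul (sq_nonneg c), Real.sqrt_sq_eq_abs]
  have hSξ : Real.sqrt ((ξ' 0)^2 + (ξ' 1)^2) ≤ X + ε * |ξ 2| * L := by
    rw [hξ'0, hξ'1]
    calc Real.sqrt ((ξ 0 + (-(ε * ξ 2 * g1)))^2 + (ξ 1 + (-(ε * ξ 2 * g2)))^2)
        ≤ X + Real.sqrt ((-(ε * ξ 2 * g1))^2 + (-(ε * ξ 2 * g2))^2) :=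
          sqrt_add_sq_tri (ξ 0) _ (ξ 1) _
      _ = X + |ε * ξ 2| * Real.sqrt (g1^2 + g2^2) := by rw [hscale]
      _ ≤ X + ε * |ξ 2| * L := by
          have : |ε * ξ 2| = ε * |ξ 2| := by rw [abs_mul, abs_of_pos hε0]
          rw [this]
          have := mul_le_mul_of_nonneg_left hg (by positivity : (0:ℝ) ≤ ε * |ξ 2|)
          linarith
  have hSζ : Real.sqrt ((ζ' 0)^2 + (ζ' 1)^2) ≤ Y + ε * |ζ 2| * L := by
    rw [hζ'0, hζ'1]
    calc Real.sqrt ((ζ 0 + (-(ε * ζ 2 * g1)))^2 + (ζ 1 + (-(ε * ζ 2 * g2)))^2)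
        ≤ Y + Real.sqrt ((-(ε * ζ 2 * g1))^2 + (-(ε * ζ 2 * g2))^2) :=
          sqrt_add_sq_tri (ζ 0) _ (ζ 1) _
      _ = Y + |ε * ζ 2| * Real.sqrt (g1^2 + g2^2) := by rw [hscale]
      _ ≤ Y + ε * |ζ 2| * L := by
          have : |ε * ζ 2| = ε * |ζ 2| := by rw [abs_mul, abs_of_pos hε0]
          rw [this]
          have := mul_le_mul_of_nonneg_left hg (by positivity : (0:ℝ) ≤ ε * |ζ 2|)
          linarith
  have h := hbd ξ' ζ'
  rw [hξ'2, hζ'2] at h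
  have hSξ0 : 0 ≤ Real.sqrt ((ξ' 0)^2 + (ξ' 1)^2) := Real.sqrt_nonneg _
  have hSζ0 : 0 ≤ Real.sqrt ((ζ' 0)^2 + (ζ' 1)^2) := Real.sqrt_nonneg _
  have hx0 : 0 ≤ |ξ 2| := abs_nonneg _
  have hy0 : 0 ≤ |ζ 2| := abs_nonneg _
  have hΛinv : 0 < Λ⁻¹ := by positivity
  have hη0 : 0 < η := lt_trans hν hνη
  have hPξ0 : 0 ≤ X + ε * |ξ 2| * L :=
    add_nonneg hX0 (mul_nonneg (mul_nonneg hε0.le hx0) hL)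
  have hPζ0 : 0 ≤ Y + ε * |ζ 2| * L :=
    add_nonneg hY0 (mul_nonneg (mul_nonneg hε0.le hy0) hL)
  have key := aux1 η ν (Real.sqrt ((ξ' 0)^2 + (ξ' 1)^2)) (Real.sqrt ((ζ' 0)^2 + (ζ' 1)^2))
    (X + ε * |ξ 2| * L) (Y + ε * |ζ 2| * L) (|ξ 2|) (|ζ 2|)
    hη0.le hν.le hx0 hy0 hSξ0 hSζ0 hPξ0 hPζ0 hSξ hSζ
  have h2 : |A₀.mulVec ξ' ⬝ᵥ ζ'| ≤ Λ⁻¹ *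
      (η * (X + ε * |ξ 2| * L) * (Y + ε * |ζ 2| * L)
        + ν * (|ξ 2| * (Y + ε * |ζ 2| * L) + |ζ 2| * (X + ε * |ξ 2| * L)
            + |ξ 2| * |ζ 2|)) :=
    le_trans h (mul_le_mul_of_nonneg_left key hΛinv.le)
  refine le_trans h2 ?_
  rw [show Λ⁻¹ * (1 + 2*L + K₀*L^2) * (η * X * Y + ν * |ξ 2| * |ζ 2|
      + (ε * η + ν) * (|ξ 2| * Y + |ζ 2| * X))
      = Λ⁻¹ * ((1 + 2*L + K₀*L^2) * (η * X * Y + ν * |ξ 2| * |ζ 2|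
      + (ε * η + ν) * (|ξ 2| * Y + |ζ 2| * X))) by ring]
  refine mul_le_mul_of_nonneg_left ?_ hΛinv.le
  have key2 := aux2 L K₀ ε η ν X Y (|ξ 2|) (|ζ 2|) hL hK.le hε0.le hε1
    hη0.le hν.le hX0 hY0 hx0 hy0 hK₀ν
  linarith [key2]
end

section
/- Under the same hypotheses (symmetric A₀ with anisotropic bounds, B = I + δ^{α-1}B_g, |Dg| ≤ L, δ^{α-1}η ≤ K₀ν, 0 < ν < η < 1), there is C = C(Λ, L, K₀) such that for all ξ ∈ ℝ³: ⟨A₀B*ξ, B*ξ⟩ ≤ C(η|ξ'|² + ν|ξ₃|²). -/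
/-!
Write `B*ξ = ξ - d ξ₃ (g, 0)` with `d = δ^(α-1) ∈ (0, 1]`. The upper anisotropic bound on `A₀`,
applied with both arguments equal and combined with `2ab ≤ a² + b²` and `ν ≤ η`, controls
`⟨A₀ζ, ζ⟩` by `2Λ⁻¹(η|ζ'|² + ν ζ₃²)`. For `ζ = B*ξ` the tangential part obeys
`|ζ'|² ≤ 2|ξ'|² + 2 d² L² ξ₃²`, and the extra term `η d² L² ξ₃²` is absorbed by `ν ξ₃²` because
`η d² ≤ η d ≤ K₀ ν`.
-/

open Matrix Real

def anisotropicSq (η ν : ℝ) (ξ : Fin 3 → ℝ) : ℝ :=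
  η * ((ξ 0) ^ 2 + (ξ 1) ^ 2) + ν * (ξ 2) ^ 2

def AnisotropicBounded (Λ η ν : ℝ) (A : Matrix (Fin 3) (Fin 3) ℝ) : Prop :=
  ∀ ξ ζ : Fin 3 → ℝ,
    |A.mulVec ξ ⬝ᵥ ζ| ≤ Λ⁻¹ *
      (η * √((ξ 0) ^ 2 + (ξ 1) ^ 2) * √((ζ 0) ^ 2 + (ζ 1) ^ 2)
        + ν * (|ξ 2| * √((ζ 0) ^ 2 + (ζ 1) ^ 2)
            + |ζ 2| * √((ξ 0) ^ 2 + (ξ 1) ^ 2) + |ξ 2| * |ζ 2|))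

theorem AnisotropicBounded.mulVec_dotProduct_self_le {Λ η ν : ℝ} {A : Matrix (Fin 3) (Fin 3) ℝ}
    (hA : AnisotropicBounded Λ η ν A) (hΛ : 0 ≤ Λ) (hν : 0 ≤ ν) (hνη : ν ≤ η)
    (ζ : Fin 3 → ℝ) :
    A.mulVec ζ ⬝ᵥ ζ ≤ 2 * Λ⁻¹ * anisotropicSq η ν ζ := by
  set a := √((ζ 0) ^ 2 + (ζ 1) ^ 2)
  have ha : a ^ 2 = (ζ 0) ^ 2 + (ζ 1) ^ 2 := sq_sqrt (by positivity)
  have hcross : ν * (|ζ 2| * a + |ζ 2| * a + |ζ 2| * |ζ 2|) ≤ η * a ^ 2 + 2 * ν * (ζ 2) ^ 2 := by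
    nlinarith [sq_nonneg (|ζ 2| - a), sq_abs (ζ 2), mul_le_mul_of_nonneg_right hνη (sq_nonneg a)]
  calc A.mulVec ζ ⬝ᵥ ζ ≤ |A.mulVec ζ ⬝ᵥ ζ| := le_abs_self _
    _ ≤ Λ⁻¹ * (η * a * a + ν * (|ζ 2| * a + |ζ 2| * a + |ζ 2| * |ζ 2|)) := hA ζ ζ
    _ ≤ Λ⁻¹ * (2 * (η * a ^ 2) + 2 * ν * (ζ 2) ^ 2) :=
        mul_le_mul_of_nonneg_left (by linarith) (inv_nonneg.mpr hΛ)
    _ = 2 * Λ⁻¹ * anisotropicSq η ν ζ := by rw [anisotropicSq, ← ha]; ring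

theorem anisotropicSq_shear_le {η ν d K₀ L g1 g2 : ℝ} (hν : 0 ≤ ν) (hη : 0 ≤ η) (hK : 0 ≤ K₀)
    (hd0 : 0 ≤ d) (hd1 : d ≤ 1) (hdη : d * η ≤ K₀ * ν) (hg : g1 ^ 2 + g2 ^ 2 ≤ L ^ 2)
    (ξ : Fin 3 → ℝ) :
    anisotropicSq η ν (ξ + (d * ξ 2) • ![-g1, -g2, 0])
      ≤ 2 * (1 + K₀ * L ^ 2) * anisotropicSq η ν ξ := by
  set t := d * ξ 2
  have htan : (ξ 0 - t * g1) ^ 2 + (ξ 1 - t * g2) ^ 2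
      ≤ 2 * ((ξ 0) ^ 2 + (ξ 1) ^ 2) + 2 * d ^ 2 * L ^ 2 * (ξ 2) ^ 2 := by
    have htg : t ^ 2 * (g1 ^ 2 + g2 ^ 2) ≤ d ^ 2 * L ^ 2 * (ξ 2) ^ 2 := by
      calc t ^ 2 * (g1 ^ 2 + g2 ^ 2) ≤ t ^ 2 * L ^ 2 := by gcongr
        _ = d ^ 2 * L ^ 2 * (ξ 2) ^ 2 := by ring
    nlinarith [sq_nonneg (ξ 0 + t * g1), sq_nonneg (ξ 1 + t * g2)]
  have hηd : η * d ^ 2 ≤ K₀ * ν := by nlinarith [mul_le_mul_of_nonneg_right hd1 (mul_nonneg hη hd0)]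
  have hηdL : η * (d ^ 2 * L ^ 2 * (ξ 2) ^ 2) ≤ K₀ * L ^ 2 * (ν * (ξ 2) ^ 2) := by
    have := mul_le_mul_of_nonneg_right hηd (mul_nonneg (sq_nonneg L) (sq_nonneg (ξ 2)))
    linarith
  have hnonneg : 0 ≤ K₀ * L ^ 2 * (η * ((ξ 0) ^ 2 + (ξ 1) ^ 2)) := by positivity
  have hνξ : 0 ≤ ν * (ξ 2) ^ 2 := by positivity
  have hζ : ∀ i, (ξ + t • ![-g1, -g2, 0]) i = ![ξ 0 - t * g1, ξ 1 - t * g2, ξ 2] i := by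
    intro i; fin_cases i <;> simp [sub_eq_add_neg]
  simp only [anisotropicSq, hζ, cons_val_zero, cons_val_one, cons_val_two, tail_cons, head_cons]
  linarith [mul_le_mul_of_nonneg_left htan hη]

theorem stmt_3_general (Λ L K₀ : ℝ) (hΛ : Λ ∈ Set.Ioo (0:ℝ) 1) (hK : 0 < K₀) :
    ∃ C > 0, ∀ (η ν δ α : ℝ) (A₀ : Matrix (Fin 3) (Fin 3) ℝ) (g1 g2 : ℝ),
      0 < ν → ν < η → η < 1 → 0 < δ → δ < 1 → 1 < α →
      A₀.IsSymm →
      Real.sqrt (g1 ^ 2 + g2 ^ 2) ≤ L →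
      δ ^ (α - 1) * η ≤ K₀ * ν →
      (∀ ξ : Fin 3 → ℝ,
        Λ * (η * ((ξ 0) ^ 2 + (ξ 1) ^ 2) + ν * (ξ 2) ^ 2) ≤ A₀.mulVec ξ ⬝ᵥ ξ) →
      (∀ ξ ζ : Fin 3 → ℝ,
        |A₀.mulVec ξ ⬝ᵥ ζ| ≤ Λ⁻¹ *
          (η * Real.sqrt ((ξ 0) ^ 2 + (ξ 1) ^ 2) * Real.sqrt ((ζ 0) ^ 2 + (ζ 1) ^ 2)
            + ν * (|ξ 2| * Real.sqrt ((ζ 0) ^ 2 + (ζ 1) ^ 2)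
                + |ζ 2| * Real.sqrt ((ξ 0) ^ 2 + (ξ 1) ^ 2) + |ξ 2| * |ζ 2|))) →
      ∀ ξ : Fin 3 → ℝ,
        A₀.mulVec (ξ + (δ ^ (α - 1) * ξ 2) • ![-g1, -g2, 0]) ⬝ᵥ
            (ξ + (δ ^ (α - 1) * ξ 2) • ![-g1, -g2, 0])
          ≤ C * (η * ((ξ 0) ^ 2 + (ξ 1) ^ 2) + ν * (ξ 2) ^ 2) := by
  obtain ⟨hΛ0, -⟩ := hΛ
  refine ⟨2 * Λ⁻¹ * (2 * (1 + K₀ * L ^ 2)), by positivity, ?_⟩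
  intro η ν δ α A₀ g1 g2 hν hνη _ hδ0 hδ1 hα _ hg hdη _ hupp ξ
  have hd0 : 0 < δ ^ (α - 1) := rpow_pos_of_pos hδ0 _
  have hd1 : δ ^ (α - 1) ≤ 1 := rpow_le_one hδ0.le hδ1.le (by linarith)
  have hgL : g1 ^ 2 + g2 ^ 2 ≤ L ^ 2 := (sqrt_le_iff.mp hg).2
  calc _ ≤ 2 * Λ⁻¹ * anisotropicSq η ν (ξ + (δ ^ (α - 1) * ξ 2) • ![-g1, -g2, 0]) :=
        AnisotropicBounded.mulVec_dotProduct_self_le hupp hΛ0.le hν.le hνη.le _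
    _ ≤ 2 * Λ⁻¹ * (2 * (1 + K₀ * L ^ 2) * anisotropicSq η ν ξ) := by
        gcongr
        exact anisotropicSq_shear_le hν.le (hν.trans hνη).le hK.le hd0.le hd1 hdη hgL ξ
    _ = _ := by rw [anisotropicSq]; ring

/-- Anisotropic upper bound for `⟨A₀ B* ξ, B* ξ⟩` (Proposition 2.1 (a), upper bound):
there is `C = C(Λ, L, K₀)` such that `⟨A₀B*ξ, B*ξ⟩ ≤ C(η|ξ'|² + ν|ξ₃|²)` for all `ξ`. -/
theorem stmt_3 (Λ L K₀ : ℝ) (hΛ : Λ ∈ Set.Ioo (0:ℝ) 1) (hL : 0 ≤ L) (hK : 0 < K₀) :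
    ∃ C > 0, ∀ (η ν δ α : ℝ) (A₀ : Matrix (Fin 3) (Fin 3) ℝ) (g1 g2 : ℝ),
      0 < ν → ν < η → η < 1 → 0 < δ → δ < 1 → 1 < α →
      A₀.IsSymm →
      Real.sqrt (g1 ^ 2 + g2 ^ 2) ≤ L →
      δ ^ (α - 1) * η ≤ K₀ * ν →
      (∀ ξ : Fin 3 → ℝ,
        Λ * (η * ((ξ 0) ^ 2 + (ξ 1) ^ 2) + ν * (ξ 2) ^ 2) ≤ A₀.mulVec ξ ⬝ᵥ ξ) →
      (∀ ξ ζ : Fin 3 → ℝ,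
        |A₀.mulVec ξ ⬝ᵥ ζ| ≤ Λ⁻¹ *
          (η * Real.sqrt ((ξ 0) ^ 2 + (ξ 1) ^ 2) * Real.sqrt ((ζ 0) ^ 2 + (ζ 1) ^ 2)
            + ν * (|ξ 2| * Real.sqrt ((ζ 0) ^ 2 + (ζ 1) ^ 2)
                + |ζ 2| * Real.sqrt ((ξ 0) ^ 2 + (ξ 1) ^ 2) + |ξ 2| * |ζ 2|))) →
      ∀ ξ : Fin 3 → ℝ,
        A₀.mulVec (ξ + (δ ^ (α - 1) * ξ 2) • ![-g1, -g2, 0]) ⬝ᵥ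
            (ξ + (δ ^ (α - 1) * ξ 2) • ![-g1, -g2, 0])
          ≤ C * (η * ((ξ 0) ^ 2 + (ξ 1) ^ 2) + ν * (ξ 2) ^ 2) :=
  stmt_3_general Λ L K₀ hΛ hK
end

section
/- Let w⁰: ℝ³₊ → ℝ³ be a divergence-free vector field (∂₁w⁰₁ + ∂₂w⁰₂ + ∂₃w⁰₃ = 0) and define w̃^δ by w̃^δ₁ = -w⁰₁, w̃^δ₂ = -w⁰₂, w̃^δ₃ = -w⁰₃ + (δ^{3/2} + δ^{α-1})(-D₁g(y'/δ)w⁰₁ - D₂g(y'/δ)w⁰₂), and w = w⁰ - δ^{α-5/2}w̃^δ. Then div(Bw) = 0, where B = I + δ^{α-1}B_g with B_g as above. -/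
/-!
Since `δ^{α-5/2} · δ^{3/2} = δ^{α-1}`, the corrector in the third component of `w̃^δ` exactly
cancels the contribution of `δ^{α-1} B_g`, so `Bw = (1 + δ^{α-5/2}) w⁰` pointwise, and its
divergence is `(1 + δ^{α-5/2}) div w⁰ = 0`.
-/

lemma rpow_sub_five_halves_mul_rpow_three_halves {δ : ℝ} (hδ : 0 < δ) (α : ℝ) :
    δ ^ (α - 5 / 2) * δ ^ ((3 : ℝ) / 2) = δ ^ (α - 1) := by
  rw [← Real.rpow_add hδ]
  ring_nf

lemma fderiv_const_mul_apply {𝕜 E : Type*} [NontriviallyNormedField 𝕜] [NormedAddCommGroup E]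
    [NormedSpace 𝕜 E] (c : 𝕜) (f : E → 𝕜) (x v : E) :
    fderiv 𝕜 (fun z => c * f z) x v = c * fderiv 𝕜 f x v := by
  change fderiv 𝕜 (c • f) x v = _
  rw [fderiv_const_smul_field]
  rfl

lemma sub_mul_neg_eq_one_add_mul {R : Type*} [CommRing R] (c u : R) : u - c * -u = (1 + c) * u := by ring

lemma corrector_cancels {R : Type*} [CommRing R] {a b u v w c s t : R} (h : c * s = t) :
    -t * a * (u - c * -u) - t * b * (v - c * -v)
      + (w - c * (-w + (s + t) * (-a * u - b * v))) = (1 + c) * w := by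
  linear_combination (a * u + b * v) * h

theorem stmt_5_general (g : ℝ × ℝ → ℝ)
    (w0 : Fin 3 → (ℝ × ℝ × ℝ → ℝ))
    (δ α : ℝ) (hδ0 : 0 < δ)
    (hdiv : ∀ y : ℝ × ℝ × ℝ, 0 < y.2.2 →
      fderiv ℝ (w0 0) y (1, 0, 0) + fderiv ℝ (w0 1) y (0, 1, 0)
        + fderiv ℝ (w0 2) y (0, 0, 1) = 0) :
    ∀ y : ℝ × ℝ × ℝ, 0 < y.2.2 →
      fderiv ℝ (fun z : ℝ × ℝ × ℝ =>
          w0 0 z - δ ^ (α - 5 / 2) * (-(w0 0 z))) y (1, 0, 0)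
      + fderiv ℝ (fun z : ℝ × ℝ × ℝ =>
          w0 1 z - δ ^ (α - 5 / 2) * (-(w0 1 z))) y (0, 1, 0)
      + fderiv ℝ (fun z : ℝ × ℝ × ℝ =>
          -(δ ^ (α - 1)) * fderiv ℝ g (δ⁻¹ • (z.1, z.2.1)) (1, 0) *
              (w0 0 z - δ ^ (α - 5 / 2) * (-(w0 0 z)))
            - δ ^ (α - 1) * fderiv ℝ g (δ⁻¹ • (z.1, z.2.1)) (0, 1) *
              (w0 1 z - δ ^ (α - 5 / 2) * (-(w0 1 z)))
            + (w0 2 z - δ ^ (α - 5 / 2) *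
                (-(w0 2 z) + (δ ^ ((3:ℝ) / 2) + δ ^ (α - 1)) *
                  (-(fderiv ℝ g (δ⁻¹ • (z.1, z.2.1)) (1, 0)) * w0 0 z
                    - fderiv ℝ g (δ⁻¹ • (z.1, z.2.1)) (0, 1) * w0 1 z)))) y (0, 0, 1)
      = 0 := by
  intro y hy
  -- `corrector_cancels` must fire before the factors `u - c * -u` inside it are normalized
  simp only [corrector_cancels (rpow_sub_five_halves_mul_rpow_three_halves hδ0 α)]
  simp only [sub_mul_neg_eq_one_add_mul, fderiv_const_mul_apply, ← mul_add, hdiv y hy, mul_zero]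

/-- Lemma 3.1 (a): with `w̃^δ` and `w = w⁰ - δ^{α-5/2}w̃^δ` built from a divergence-free
field `w⁰` on the half space, one has `div(Bw) = 0`, where
`B = I + δ^{α-1}B_g` and `B_g` has entries `-D₁g(y'/δ), -D₂g(y'/δ)` in row 3. -/
theorem stmt_5 (g : ℝ × ℝ → ℝ) (hg : ContDiff ℝ 2 g) (hg0 : ∀ p, 0 ≤ g p)
    (w0 : Fin 3 → (ℝ × ℝ × ℝ → ℝ)) (hw0 : ∀ i, ContDiff ℝ 1 (w0 i))
    (δ α : ℝ) (hδ0 : 0 < δ) (hδ1 : δ < 1) (hα : 5 / 2 < α)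
    (hdiv : ∀ y : ℝ × ℝ × ℝ, 0 < y.2.2 →
      fderiv ℝ (w0 0) y (1, 0, 0) + fderiv ℝ (w0 1) y (0, 1, 0)
        + fderiv ℝ (w0 2) y (0, 0, 1) = 0) :
    ∀ y : ℝ × ℝ × ℝ, 0 < y.2.2 →
      fderiv ℝ (fun z : ℝ × ℝ × ℝ =>
          w0 0 z - δ ^ (α - 5 / 2) * (-(w0 0 z))) y (1, 0, 0)
      + fderiv ℝ (fun z : ℝ × ℝ × ℝ =>
          w0 1 z - δ ^ (α - 5 / 2) * (-(w0 1 z))) y (0, 1, 0)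
      + fderiv ℝ (fun z : ℝ × ℝ × ℝ =>
          -(δ ^ (α - 1)) * fderiv ℝ g (δ⁻¹ • (z.1, z.2.1)) (1, 0) *
              (w0 0 z - δ ^ (α - 5 / 2) * (-(w0 0 z)))
            - δ ^ (α - 1) * fderiv ℝ g (δ⁻¹ • (z.1, z.2.1)) (0, 1) *
              (w0 1 z - δ ^ (α - 5 / 2) * (-(w0 1 z)))
            + (w0 2 z - δ ^ (α - 5 / 2) *
                (-(w0 2 z) + (δ ^ ((3:ℝ) / 2) + δ ^ (α - 1)) *
                  (-(fderiv ℝ g (δ⁻¹ • (z.1, z.2.1)) (1, 0)) * w0 0 z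
                    - fderiv ℝ g (δ⁻¹ • (z.1, z.2.1)) (0, 1) * w0 1 z)))) y (0, 0, 1)
      = 0 :=
  stmt_5_general g w0 δ α hδ0 hdiv
end

section
/- With 𝓑 as in the previous statement, and assuming additionally the compatibility condition c(y') = δ^{α-1}(D₁g(y'/δ)a(y') + D₂g(y'/δ)b(y')) for all y', and B = I + δ^{α-1}B_g with B_g as before, one has div(B𝓑) = 0 on ℝ³₊, and moreover the third component satisfies (B𝓑)₃(y) = ε·A(y')·ψ(y₃/ε) where A(y') = ∂₁a(y') + ∂₂b(y'). -/
open Real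

/-- With `𝓑` as in the boundary-layer construction and the compatibility condition
`c(y') = δ^{α-1}(D₁g(y'/δ)a(y') + D₂g(y'/δ)b(y'))`, one has `div(B𝓑) = 0` on the half
space, and the third component satisfies `(B𝓑)₃(y) = ε·(∂₁a + ∂₂b)(y')·ψ(y₃/ε)`.
Partial derivatives are one-dimensional derivatives along coordinate lines. -/
theorem stmt_12 (φ ψ : ℝ → ℝ) (hφ : ContDiff ℝ (⊤ : ℕ∞) φ) (hψ : ContDiff ℝ (⊤ : ℕ∞) ψ)
    (hψ' : ∀ z, deriv ψ z = φ z) (hφ0 : φ 0 = 1) (hψ0 : ψ 0 = 0)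
    (hφsupp : ∀ z > (1:ℝ), φ z = 0) (hψsupp : ∀ z > (1:ℝ), ψ z = 0)
    (g : ℝ × ℝ → ℝ) (hg : ContDiff ℝ 2 g)
    (a b c : ℝ × ℝ → ℝ) (ha : ContDiff ℝ 1 a) (hb : ContDiff ℝ 1 b)
    (hc : ContDiff ℝ 1 c) (ε δ α : ℝ) (hε : 0 < ε)
    (hδ0 : 0 < δ) (hδ1 : δ < 1) (hα : 1 < α)
    (hcompat : ∀ p : ℝ × ℝ,
      c p = δ ^ (α - 1) * (fderiv ℝ g (δ⁻¹ • p) (1, 0) * a p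
        + fderiv ℝ g (δ⁻¹ • p) (0, 1) * b p)) :
    ∀ y : ℝ × ℝ × ℝ, 0 < y.2.2 →
      (deriv (fun t => -a (t, y.2.1) * φ (y.2.2 / ε)) y.1
        + deriv (fun t => -b (y.1, t) * φ (y.2.2 / ε)) y.2.1
        + deriv (fun t =>
            -(δ ^ (α - 1)) * (fderiv ℝ g (δ⁻¹ • (y.1, y.2.1)) (1, 0) *
                  (-a (y.1, y.2.1) * φ (t / ε))
                + fderiv ℝ g (δ⁻¹ • (y.1, y.2.1)) (0, 1) *
                  (-b (y.1, y.2.1) * φ (t / ε)))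
              + (-c (y.1, y.2.1) * φ (t / ε)
                + ε * (fderiv ℝ a (y.1, y.2.1) (1, 0)
                    + fderiv ℝ b (y.1, y.2.1) (0, 1)) * ψ (t / ε))) y.2.2
        = 0) ∧
      (-(δ ^ (α - 1)) * (fderiv ℝ g (δ⁻¹ • (y.1, y.2.1)) (1, 0) *
            (-a (y.1, y.2.1) * φ (y.2.2 / ε))
          + fderiv ℝ g (δ⁻¹ • (y.1, y.2.1)) (0, 1) *
            (-b (y.1, y.2.1) * φ (y.2.2 / ε)))
        + (-c (y.1, y.2.1) * φ (y.2.2 / ε)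
          + ε * (fderiv ℝ a (y.1, y.2.1) (1, 0)
              + fderiv ℝ b (y.1, y.2.1) (0, 1)) * ψ (y.2.2 / ε))
        = ε * (fderiv ℝ a (y.1, y.2.1) (1, 0) + fderiv ℝ b (y.1, y.2.1) (0, 1))
            * ψ (y.2.2 / ε)) := by
  intro y hy
  obtain ⟨y1, y2, y3⟩ := y
  simp only at *
  set p : ℝ × ℝ := (y1, y2) with hp
  set Dg1 := fderiv ℝ g (δ⁻¹ • p) (1, 0)
  set Dg2 := fderiv ℝ g (δ⁻¹ • p) (0, 1)
  set Da := fderiv ℝ a p (1, 0)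
  set Db := fderiv ℝ b p (0, 1)
  have hcomp := hcompat p
  constructor
  · -- derivatives of the first two terms
    have h1 : HasDerivAt (fun t => -a (t, y2) * φ (y3 / ε)) (-Da * φ (y3 / ε)) y1 := by
      have : HasDerivAt (fun t : ℝ => a (t, y2)) Da y1 := by
        have := ((ha.differentiable one_ne_zero) p).hasFDerivAt.comp_hasDerivAt y1
          ((hasDerivAt_id y1).prodMk (hasDerivAt_const y1 y2))
        exact this
      simpa [neg_mul] using (this.neg.mul_const (φ (y3 / ε)))
    have h2 : HasDerivAt (fun t => -b (y1, t) * φ (y3 / ε)) (-Db * φ (y3 / ε)) y2 := by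
      have : HasDerivAt (fun t : ℝ => b (y1, t)) Db y2 := by
        have := ((hb.differentiable one_ne_zero) p).hasFDerivAt.comp_hasDerivAt y2
          ((hasDerivAt_const y2 y1).prodMk (hasDerivAt_id y2))
        exact this
      simpa [neg_mul] using (this.neg.mul_const (φ (y3 / ε)))
    have h3fun : (fun t =>
            -(δ ^ (α - 1)) * (Dg1 * (-a p * φ (t / ε)) + Dg2 * (-b p * φ (t / ε)))
              + (-c p * φ (t / ε) + ε * (Da + Db) * ψ (t / ε)))
        = fun t => ε * (Da + Db) * ψ (t / ε) := by
      funext t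
      rw [hcomp]; ring
    have h3 : HasDerivAt (fun t : ℝ => ε * (Da + Db) * ψ (t / ε))
        ((Da + Db) * φ (y3 / ε)) y3 := by
      have hψd : HasDerivAt ψ (φ (y3 / ε)) (y3 / ε) := by
        have := ((hψ.differentiable (by simp)) (y3 / ε)).hasDerivAt
        rwa [hψ' (y3 / ε)] at this
      have hdiv : HasDerivAt (fun t : ℝ => t / ε) (1 / ε) y3 := by
        simpa using (hasDerivAt_id y3).div_const ε
      have := (hψd.comp y3 hdiv).const_mul (ε * (Da + Db))
      have hε' : ε ≠ 0 := ne_of_gt hε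
      rw [show (Da + Db) * φ (y3 / ε) = ε * (Da + Db) * (φ (y3 / ε) * (1 / ε)) by field_simp]
      exact this
    rw [h1.deriv, h2.deriv, h3fun, h3.deriv]
    ring
  · rw [hcomp]; ring
end

section
/- (Grönwall-type lemma) Let γ > 0, T ∈ (0,∞), and let f₀, f₁, f₂ ∈ L¹(0,T) be nonnegative functions with ∫₀ᵀ f₀ dt ≤ C, ∫₀ᵀ f₁ dt ≤ Cγ, ∫₀ᵀ f₂ dt ≤ Cγ² for some constant C > 0. Then there exists M = M(C) > 0 such that every nonnegative absolutely continuous function f on [0,T] satisfying ∂ₜ(f²) ≤ f₀(t)f² + f₁(t)f + f₂(t) a.e. on (0,T) and f(0) ≤ Cγ, satisfies f(t) ≤ Mγ for all t ∈ [0,T]. -/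
/-!
On an interval `[a, b]` with `∫ f₀ ≤ 1/2`, the integrated inequality evaluated at a maximum
point `s` of `f` reads `f(s)² ≤ f(a)² + f(s)²/2 + (∫ f₁) f(s) + ∫ f₂`: the term `f₀ f²` is
absorbed, and `f(b)² ≤ 4 f(a)² + 4 (C² + C) γ²`. Cutting `[0, T]` where `∫₀ᵗ f₀` crosses the
multiples of `1/2`, at most `⌈2C⌉` times, and iterating this estimate bounds `f²` by a constant
depending only on `C` times `γ²`.
-/

open Real MeasureTheory intervalIntegral Set

theorem ae_restrict_Icc_of_ae_Ioo {P : ℝ → Prop} {a b : ℝ} (h : ∀ᵐ u, u ∈ Ioo a b → P u) :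
    ∀ᵐ u ∂volume.restrict (Icc a b), P u := by
  rw [ae_restrict_congr_set Ioo_ae_eq_Icc.symm, ae_restrict_iff' measurableSet_Ioo]
  exact h

theorem integral_mono_interval_of_nonneg_on_Ioo {g : ℝ → ℝ} {a b c e : ℝ}
    (hg : IntervalIntegrable g volume a b) (hg₀ : ∀ t ∈ Ioo a b, 0 ≤ g t)
    (hac : a ≤ c) (hce : c ≤ e) (heb : e ≤ b) :
    ∫ u in c..e, g u ≤ ∫ u in a..b, g u :=
  integral_mono_interval hac hce heb (ae_restrict_of_ae_restrict_of_subset Ioc_subset_Icc_self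
    (ae_restrict_Icc_of_ae_Ioo (ae_of_all _ hg₀))) hg

/-- `f ≥ 0` and `∂ₜ(f²) ≤ p f² + q f + r` a.e. on `[a, b]`; absolute continuity of `f²` is encoded
by asking `f²` to be the primitive of its a.e. derivative `d`. -/
structure IsGronwallSubsolution (p q r f d : ℝ → ℝ) (a b : ℝ) : Prop where
  intervalIntegrable_p : IntervalIntegrable p volume a b
  intervalIntegrable_q : IntervalIntegrable q volume a b
  intervalIntegrable_r : IntervalIntegrable r volume a b
  intervalIntegrable_d : IntervalIntegrable d volume a b
  p_nonneg : ∀ t ∈ Ioo a b, 0 ≤ p t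
  q_nonneg : ∀ t ∈ Ioo a b, 0 ≤ q t
  r_nonneg : ∀ t ∈ Ioo a b, 0 ≤ r t
  nonneg : ∀ t ∈ Icc a b, 0 ≤ f t
  sq_eq : ∀ t ∈ Icc a b, f t ^ 2 = f a ^ 2 + ∫ u in a..t, d u
  deriv_le : ∀ᵐ u, u ∈ Ioo a b → d u ≤ p u * f u ^ 2 + q u * f u + r u

namespace IsGronwallSubsolution

variable {p q r f d : ℝ → ℝ} {a b : ℝ}

theorem mono (h : IsGronwallSubsolution p q r f d a b) {a' b' : ℝ} (ha : a ≤ a') (hab' : a' ≤ b')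
    (hb : b' ≤ b) : IsGronwallSubsolution p q r f d a' b' := by
  have huIcc : ∀ c ∈ Icc a b, ∀ e ∈ Icc c b, uIcc c e ⊆ uIcc a b := fun c hc e he => by
    rw [uIcc_of_le he.1, uIcc_of_le (hc.1.trans (he.1.trans he.2))]
    exact Icc_subset_Icc hc.1 he.2
  have hIcc : Icc a' b' ⊆ Icc a b := Icc_subset_Icc ha hb
  have hIoo : Ioo a' b' ⊆ Ioo a b := Ioo_subset_Ioo ha hb
  have ha' : a' ∈ Icc a b := hIcc (left_mem_Icc.mpr hab')
  have hsub := huIcc a' ha' b' ⟨hab', hb⟩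
  refine ⟨h.1.mono_set hsub, h.2.mono_set hsub, h.3.mono_set hsub, h.4.mono_set hsub,
    fun t ht => h.p_nonneg t (hIoo ht), fun t ht => h.q_nonneg t (hIoo ht),
    fun t ht => h.r_nonneg t (hIoo ht), fun t ht => h.nonneg t (hIcc ht), fun t ht => ?_, ?_⟩
  · have hd : ∀ c ∈ Icc a b, IntervalIntegrable d volume a c := fun c hc =>
      h.4.mono_set (huIcc a (left_mem_Icc.mpr (hc.1.trans hc.2)) c hc)
    rw [h.sq_eq t (hIcc ht), h.sq_eq a' ha',
      ← integral_interval_sub_left (hd t (hIcc ht)) (hd a' ha')]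
    ring
  · filter_upwards [h.deriv_le] with u hu hu' using hu (hIoo hu')

theorem continuousOn (h : IsGronwallSubsolution p q r f d a b) (hab : a ≤ b) :
    ContinuousOn f (Icc a b) := by
  have hprim : ContinuousOn (fun t => ∫ u in a..t, d u) (Icc a b) := by
    simpa only [uIcc_of_le hab] using
      continuousOn_primitive_interval' h.intervalIntegrable_d left_mem_uIcc
  refine ((continuousOn_const (c := f a ^ 2)).add hprim).sqrt.congr fun t ht => ?_
  show f t = √(f a ^ 2 + ∫ u in a..t, d u)
  rw [← h.sq_eq t ht, sqrt_sq (h.nonneg t ht)]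

theorem sq_le_of_forall_le (h : IsGronwallSubsolution p q r f d a b) (hab : a ≤ b) {m : ℝ}
    (hm : ∀ t ∈ Icc a b, f t ≤ m) {t : ℝ} (ht : t ∈ Icc a b) :
    f t ^ 2 ≤ f a ^ 2 + (∫ u in a..b, p u) * m ^ 2 + (∫ u in a..b, q u) * m +
      ∫ u in a..b, r u := by
  have hm₀ : 0 ≤ m := (h.nonneg a (left_mem_Icc.mpr hab)).trans (hm a (left_mem_Icc.mpr hab))
  set g := fun u => p u * m ^ 2 + q u * m + r u
  have hg : IntervalIntegrable g volume a b :=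
    ((h.1.mul_const _).add (h.2.mul_const _)).add h.3
  have hg₀ : ∀ u ∈ Ioo a b, 0 ≤ g u := fun u hu => by
    have := h.p_nonneg u hu; have := h.q_nonneg u hu; have := h.r_nonneg u hu
    positivity
  have hat := h.mono le_rfl ht.1 ht.2
  calc f t ^ 2 = f a ^ 2 + ∫ u in a..t, d u := h.sq_eq t ht
    _ ≤ f a ^ 2 + ∫ u in a..t, g u := by
      refine add_le_add_right (integral_mono_ae_restrict ht.1 hat.4 (hg.mono_set ?_)
        (ae_restrict_Icc_of_ae_Ioo ?_)) _
      · rw [uIcc_of_le ht.1, uIcc_of_le hab]; exact Icc_subset_Icc le_rfl ht.2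
      · filter_upwards [hat.deriv_le] with u hu hu'
        have hfu₀ : 0 ≤ f u := hat.nonneg u (Ioo_subset_Icc_self hu')
        have hfum : f u ≤ m := hm u (Icc_subset_Icc le_rfl ht.2 (Ioo_subset_Icc_self hu'))
        have := hat.p_nonneg u hu'; have := hat.q_nonneg u hu'
        calc d u ≤ p u * f u ^ 2 + q u * f u + r u := hu hu'
          _ ≤ g u := by simp only [g]; gcongr
    _ ≤ f a ^ 2 + ∫ u in a..b, g u :=
      add_le_add_right (integral_mono_interval_of_nonneg_on_Ioo hg hg₀ le_rfl ht.1 ht.2) _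
    _ = _ := by
      rw [integral_add ((h.1.mul_const _).add (h.2.mul_const _)) h.3,
        integral_add (h.1.mul_const _) (h.2.mul_const _), intervalIntegral.integral_mul_const,
        intervalIntegral.integral_mul_const]
      ring

theorem sq_le_four_mul (h : IsGronwallSubsolution p q r f d a b) (hab : a ≤ b) {β ρ : ℝ}
    (hp : ∫ u in a..b, p u ≤ 1 / 2) (hq : ∫ u in a..b, q u ≤ β) (hr : ∫ u in a..b, r u ≤ ρ) :
    f b ^ 2 ≤ 4 * f a ^ 2 + 4 * β ^ 2 + 4 * ρ := by
  obtain ⟨s, hs, hmax⟩ :=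
    isCompact_Icc.exists_isMaxOn (nonempty_Icc.mpr hab) (h.continuousOn hab)
  have hs₀ : 0 ≤ f s := h.nonneg s hs
  have hsq : f s ^ 2 ≤ f a ^ 2 + f s ^ 2 / 2 + β * f s + ρ := by
    have := h.sq_le_of_forall_le hab (fun t ht => hmax ht) hs
    have := mul_le_mul_of_nonneg_right hp (sq_nonneg (f s))
    have := mul_le_mul_of_nonneg_right hq hs₀
    linarith
  have hb : f b ^ 2 ≤ f s ^ 2 :=
    pow_le_pow_left₀ (h.nonneg b (right_mem_Icc.mpr hab)) (hmax (right_mem_Icc.mpr hab)) 2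
  nlinarith [sq_nonneg (f s - 2 * β)]

end IsGronwallSubsolution

theorem exists_mem_Icc_le_and_sub_le {F : ℝ → ℝ} {a b c δ : ℝ} (hab : a ≤ b)
    (hF : ContinuousOn F (Icc a b)) (ha : F a ≤ c) (hb : F b ≤ c + δ) (hδ : 0 ≤ δ) :
    ∃ t ∈ Icc a b, F t ≤ c ∧ F b - F t ≤ δ := by
  by_cases hbc : F b ≤ c
  · exact ⟨b, right_mem_Icc.mpr hab, hbc, by simpa using hδ⟩
  · obtain ⟨t, ht, hFt⟩ := intermediate_value_Icc hab hF ⟨ha, (not_le.mp hbc).le⟩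
    exact ⟨t, ht, hFt.le, by linarith⟩

theorem le_pow_mul_of_le_mul_add {F φ : ℝ → ℝ} {t₀ T δ L K : ℝ} (hF : ContinuousOn F (Icc t₀ T))
    (hF₀ : F t₀ = 0) (hδ : 0 ≤ δ) (hL : 0 ≤ L) (hK : 0 ≤ K) (hφ₀ : 0 ≤ φ t₀)
    (hstep : ∀ a ∈ Icc t₀ T, ∀ x ∈ Icc a T, F x - F a ≤ δ → φ x ≤ L * φ a + K) (n : ℕ) :
    ∀ x ∈ Icc t₀ T, F x ≤ n * δ → φ x ≤ (L + 1) ^ (n + 1) * (φ t₀ + K) := by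
  induction n with
  | zero =>
    intro x hx hFx
    have := hstep t₀ (left_mem_Icc.mpr (hx.1.trans hx.2)) x hx
      (by rw [hF₀, sub_zero]; push_cast at hFx; linarith)
    simp only [zero_add, pow_one]
    nlinarith
  | succ n ih =>
    intro x hx hFx
    obtain ⟨a, ha, hFa, hFxa⟩ := exists_mem_Icc_le_and_sub_le (c := n * δ) hx.1
      (hF.mono (Icc_subset_Icc le_rfl hx.2)) (by rw [hF₀]; positivity)
      (by push_cast at hFx; linarith) hδ
    have haT : a ∈ Icc t₀ T := ⟨ha.1, ha.2.trans hx.2⟩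
    have hpow : 1 ≤ (L + 1) ^ (n + 1) := one_le_pow₀ (by linarith)
    calc φ x ≤ L * ((L + 1) ^ (n + 1) * (φ t₀ + K)) + K :=
          (hstep a haT x ⟨ha.2, hx.2⟩ hFxa).trans (by gcongr; exact ih a haT hFa)
      _ ≤ (L + 1) ^ (n + 1 + 1) * (φ t₀ + K) := by
        rw [pow_succ (L + 1) (n + 1)]
        nlinarith [mul_le_mul_of_nonneg_right hpow (by positivity : 0 ≤ φ t₀ + K)]

/-- Grönwall-type lemma (Lemma 5.1): for every `C > 0` there is `M = M(C) > 0` such that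
whenever `γ > 0`, `T > 0`, `f₀, f₁, f₂ ∈ L¹(0,T)` are nonnegative with
`∫f₀ ≤ C`, `∫f₁ ≤ Cγ`, `∫f₂ ≤ Cγ²`, and `f ≥ 0` is such that `f²` is absolutely
continuous with a.e. derivative `d ≤ f₀f² + f₁f + f₂` (encoded via the fundamental
theorem of calculus) and `f(0) ≤ Cγ`, then `f(t) ≤ Mγ` on `[0,T]`. -/
theorem stmt_13 (C : ℝ) (hC : 0 < C) :
    ∃ M > 0, ∀ (γ T : ℝ) (f0 f1 f2 f d : ℝ → ℝ),
      0 < γ → 0 < T →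
      IntervalIntegrable f0 volume 0 T → IntervalIntegrable f1 volume 0 T →
      IntervalIntegrable f2 volume 0 T → IntervalIntegrable d volume 0 T →
      (∀ t ∈ Set.Ioo 0 T, 0 ≤ f0 t) → (∀ t ∈ Set.Ioo 0 T, 0 ≤ f1 t) →
      (∀ t ∈ Set.Ioo 0 T, 0 ≤ f2 t) →
      (∫ t in (0:ℝ)..T, f0 t) ≤ C → (∫ t in (0:ℝ)..T, f1 t) ≤ C * γ →
      (∫ t in (0:ℝ)..T, f2 t) ≤ C * γ ^ 2 →
      (∀ t ∈ Set.Icc (0:ℝ) T, 0 ≤ f t) →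
      (∀ t ∈ Set.Icc (0:ℝ) T, f t ^ 2 = f 0 ^ 2 + ∫ u in (0:ℝ)..t, d u) →
      (∀ᵐ u ∂volume, u ∈ Set.Ioo (0:ℝ) T →
        d u ≤ f0 u * f u ^ 2 + f1 u * f u + f2 u) →
      f 0 ≤ C * γ →
      ∀ t ∈ Set.Icc (0:ℝ) T, f t ≤ M * γ := by
  set B := 5 ^ (⌈2 * C⌉₊ + 1) * (5 * C ^ 2 + 4 * C)
  have hB : 0 < B := by positivity
  refine ⟨√B, sqrt_pos.mpr hB, ?_⟩
  intro γ T f0 f1 f2 f d hγ hT hi0 hi1 hi2 hid hn0 hn1 hn2 hI0 hI1 hI2 hf hsq hd hf0 t ht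
  have hsol : IsGronwallSubsolution f0 f1 f2 f d 0 T :=
    ⟨hi0, hi1, hi2, hid, hn0, hn1, hn2, hf, hsq, hd⟩
  have hF : ContinuousOn (fun x => ∫ u in (0:ℝ)..x, f0 u) (Icc 0 T) := by
    simpa only [uIcc_of_le hT.le] using continuousOn_primitive_interval' hi0 left_mem_uIcc
  have hstep : ∀ a ∈ Icc 0 T, ∀ x ∈ Icc a T,
      (∫ u in (0:ℝ)..x, f0 u) - (∫ u in (0:ℝ)..a, f0 u) ≤ 1 / 2 →
      f x ^ 2 ≤ 4 * f a ^ 2 + 4 * (C ^ 2 + C) * γ ^ 2 := by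
    intro a ha x hx hax
    have h0x := hsol.mono le_rfl (ha.1.trans hx.1) hx.2
    rw [integral_interval_sub_left h0x.1 (h0x.mono le_rfl ha.1 hx.1).1] at hax
    have := (hsol.mono ha.1 hx.1 hx.2).sq_le_four_mul hx.1 hax
      ((integral_mono_interval_of_nonneg_on_Ioo hi1 hn1 ha.1 hx.1 hx.2).trans hI1)
      ((integral_mono_interval_of_nonneg_on_Ioo hi2 hn2 ha.1 hx.1 hx.2).trans hI2)
    linarith
  have hf0' : f 0 ^ 2 ≤ (C * γ) ^ 2 :=
    pow_le_pow_left₀ (hf 0 (left_mem_Icc.mpr hT.le)) hf0 2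
  have hft : f t ^ 2 ≤ B * γ ^ 2 :=
    calc f t ^ 2 ≤ (4 + 1) ^ (⌈2 * C⌉₊ + 1) * (f 0 ^ 2 + 4 * (C ^ 2 + C) * γ ^ 2) :=
          le_pow_mul_of_le_mul_add hF (by simp) (by norm_num) (by norm_num) (by positivity)
            (sq_nonneg (f 0)) hstep ⌈2 * C⌉₊ t ht
            (by linarith [integral_mono_interval_of_nonneg_on_Ioo hi0 hn0 le_rfl ht.1 ht.2,
              Nat.le_ceil (2 * C)])
      _ ≤ (4 + 1) ^ (⌈2 * C⌉₊ + 1) * ((5 * C ^ 2 + 4 * C) * γ ^ 2) := by gcongr; linarith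
      _ = B * γ ^ 2 := by ring
  calc f t = √(f t ^ 2) := (sqrt_sq (hf t ht)).symm
    _ ≤ √(B * γ ^ 2) := sqrt_le_sqrt hft
    _ = √B * γ := by rw [sqrt_mul hB.le, sqrt_sq hγ.le]
end
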